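/- Suppose all hospitals have binary OXS valuations and doctors have strict complete preference orders. Let X be the HWSD-optimal allocation. Fix a hospital h and a subset T ⊆ X_h, and define f_T(S) = |S ∩ T| for S ⊆ D. Let Y be the HWSD-optimal allocation for the profile in which v_h is replaced by f_T (all other hospital valuations and all doctor preferences unchanged). Then Y_h = T. -/

import Mathlib

open Finset

/-- A matroid rank function on subsets of a finite ground set. -/
def IsMRF {α : Type*} [DecidableEq α] (v : Finset α → ℤ) : Prop :=
  v ∅ = 0 ∧
  (∀ (S : Finset α) (d : α), d ∉ S →
    v (insert d S) - v S = 0 ∨ v (insert d S) - v S = 1) ∧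
  (∀ (S T : Finset α) (d : α), S ⊆ T → d ∉ T →
    v (insert d T) - v T ≤ v (insert d S) - v S)

/-- The bundle of doctors assigned to hospital `h` under allocation `X`. -/
def bundle {n m : ℕ} (X : Fin m → Option (Fin n)) (h : Fin n) : Finset (Fin m) :=
  Finset.univ.filter (fun d => X d = some h)

/-- An allocation is non-redundant if every hospital's bundle is independent. -/
def NonRedundant {n m : ℕ} (v : Fin n → Finset (Fin m) → ℤ)
    (X : Fin m → Option (Fin n)) : Prop :=
  ∀ h, v h (bundle X h) = (bundle X h).card

/-- Hospital utilitarian welfare. -/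
def USW {n m : ℕ} (v : Fin n → Finset (Fin m) → ℤ) (X : Fin m → Option (Fin n)) : ℤ :=
  ∑ h, v h (bundle X h)

/-- Doctor `d` strictly prefers the first outcome to the second; every hospital is
strictly preferred to being unallocated (`none`). -/
def OptStrictPref {n m : ℕ} (P : Fin m → Fin n → Fin n → Prop) (d : Fin m) :
    Option (Fin n) → Option (Fin n) → Prop
  | some h, some h' => P d h h'
  | some _, none => True
  | none, _ => False

/-- `(h, S)` is a blocking pair for `X`. -/
def IsBlockingPair {n m : ℕ} (v : Fin n → Finset (Fin m) → ℤ)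
    (P : Fin m → Fin n → Fin n → Prop) (X : Fin m → Option (Fin n))
    (h : Fin n) (S : Finset (Fin m)) : Prop :=
  v h S = S.card ∧ v h (bundle X h) < v h S ∧
    ∀ d ∈ S, X d = some h ∨ OptStrictPref P d (some h) (X d)

/-- An allocation is stable if it is non-redundant and admits no blocking pair. -/
def Stable {n m : ℕ} (v : Fin n → Finset (Fin m) → ℤ)
    (P : Fin m → Fin n → Fin n → Prop) (X : Fin m → Option (Fin n)) : Prop :=
  NonRedundant v X ∧ ¬ ∃ h S, IsBlockingPair v P X h S

/-- The HWSD ordering on non-redundant allocations: `X` beats `Y`. -/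
def HWSDgt {n m : ℕ} (v : Fin n → Finset (Fin m) → ℤ)
    (P : Fin m → Fin n → Fin n → Prop) (X Y : Fin m → Option (Fin n)) : Prop :=
  USW v Y < USW v X ∨
  (USW v X = USW v Y ∧ ∃ j : Fin m,
    OptStrictPref P j (X j) (Y j) ∧ ∀ k : Fin m, k < j → X k = Y k)

/-- `X` is the HWSD-optimal allocation: the greatest non-redundant allocation in the
HWSD ordering (the output of the High Welfare Serial Dictatorship mechanism). -/
def IsHWSDOpt {n m : ℕ} (v : Fin n → Finset (Fin m) → ℤ)
    (P : Fin m → Fin n → Fin n → Prop) (X : Fin m → Option (Fin n)) : Prop :=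
  NonRedundant v X ∧ ∀ Y, NonRedundant v Y → Y ≠ X → HWSDgt v P X Y

/-- A binary OXS valuation: `v S` is the size of a maximum matching of `S` into a
finite set of slots in a bipartite graph. -/
def IsBinaryOXS {α : Type*} (v : Finset α → ℤ) : Prop :=
  ∃ (k : ℕ) (E : α → Fin k → Prop),
    ∀ S : Finset α,
      IsGreatest {r : ℤ | ∃ M : Finset (α × Fin k),
        (∀ p ∈ M, p.1 ∈ S ∧ E p.1 p.2) ∧
        (∀ p ∈ M, ∀ q ∈ M, p.1 = q.1 → p = q) ∧
        (∀ p ∈ M, ∀ q ∈ M, p.2 = q.2 → p = q) ∧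
        (M.card : ℤ) = r} (v S)

/-!
Since `f_T (Y_h) = |Y_h|`, we have `Y_h ⊆ T`; suppose some `d₀ ∈ T` is not in `Y_h`. Realize
`X` and `Y` by matchings `M`, `N` of doctors into the slots of the hospitals' OXS graphs, with
`N_h ⊆ M_h`. Let `D` be the set of doctors reached from `d₀` by repeatedly following a doctor's
`N`-edge to its slot and then the `M`-edge of that slot. An `M`-edge and an `N`-edge at a common
slot have both doctors in `D` or neither, so exchanging `X` and `Y` on `D` yields allocations that
are again realized by matchings; the one built from `Y` gives `h` only doctors of `Y_h` and `d₀`,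
so it is feasible for `f_T`. The exchange preserves the total welfare of the two profiles, so by
optimality it preserves each welfare, and the first doctor of `D` on which `X` and `Y` differ
would then strictly prefer each of her two hospitals to the other.
-/

section Matching

variable {α β : Type*}

def IsMatching (E : α → β → Prop) (M : Finset (α × β)) : Prop :=
  (∀ p ∈ M, E p.1 p.2) ∧ Set.InjOn Prod.fst (M : Set (α × β)) ∧
    Set.InjOn Prod.snd (M : Set (α × β))

variable {E : α → β → Prop} {A B M : Finset (α × β)}

lemma IsMatching.subset (hM : IsMatching E M) (hA : A ⊆ M) : IsMatching E A :=
  ⟨fun p hp => hM.1 p (hA hp), hM.2.1.mono (by simpa using hA), hM.2.2.mono (by simpa using hA)⟩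

lemma IsMatching.union [DecidableEq α] [DecidableEq β] (hA : IsMatching E A)
    (hB : IsMatching E B) (hfst : ∀ p ∈ A, ∀ q ∈ B, p.1 ≠ q.1)
    (hsnd : ∀ p ∈ A, ∀ q ∈ B, p.2 ≠ q.2) : IsMatching E (A ∪ B) := by
  have hdisj : Disjoint (A : Set (α × β)) B :=
    Set.disjoint_left.mpr fun p hpA hpB => hfst p hpA p hpB rfl
  refine ⟨fun p hp => ?_, ?_, ?_⟩
  · rcases Finset.mem_union.mp hp with hp | hp
    exacts [hA.1 p hp, hB.1 p hp]
  · rw [Finset.coe_union, Set.injOn_union hdisj]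
    exact ⟨hA.2.1, hB.2.1, hfst⟩
  · rw [Finset.coe_union, Set.injOn_union hdisj]
    exact ⟨hA.2.2, hB.2.2, hsnd⟩

lemma IsMatching.card_image_fst [DecidableEq α] (hM : IsMatching E M) :
    (M.image Prod.fst).card = M.card :=
  Finset.card_image_of_injOn hM.2.1

end Matching

section OXS

variable {α : Type*} {κ : ℕ}

/-- `IsBinaryOXS v` unfolds to `∃ κ E, IsOXSRep E v`. -/
def IsOXSRep (E : α → Fin κ → Prop) (v : Finset α → ℤ) : Prop :=
  ∀ S : Finset α,
    IsGreatest {r : ℤ | ∃ M : Finset (α × Fin κ),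
      (∀ p ∈ M, p.1 ∈ S ∧ E p.1 p.2) ∧
      (∀ p ∈ M, ∀ q ∈ M, p.1 = q.1 → p = q) ∧
      (∀ p ∈ M, ∀ q ∈ M, p.2 = q.2 → p = q) ∧
      (M.card : ℤ) = r} (v S)

variable {E : α → Fin κ → Prop} {v : Finset α → ℤ}

lemma IsOXSRep.le_card (hv : IsOXSRep E v) (S : Finset α) : v S ≤ S.card := by
  obtain ⟨M, hMS, hfst, -, hcard⟩ := (hv S).1
  rw [← hcard, Nat.cast_le]
  exact Finset.card_le_card_of_injOn Prod.fst (fun p hp => (hMS p hp).1)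
    fun p hp q hq => hfst p hp q hq

variable [DecidableEq α]

lemma IsOXSRep.apply_image_fst (hv : IsOXSRep E v) {M : Finset (α × Fin κ)}
    (hM : IsMatching E M) : v (M.image Prod.fst) = (M.image Prod.fst).card := by
  refine le_antisymm (hv.le_card _) ?_
  rw [hM.card_image_fst]
  exact (hv _).2 ⟨M, fun p hp => ⟨Finset.mem_image_of_mem _ hp, hM.1 p hp⟩,
    fun p hp q hq => hM.2.1 hp hq, fun p hp q hq => hM.2.2 hp hq, rfl⟩

lemma IsOXSRep.exists_isMatching (hv : IsOXSRep E v) {S : Finset α} (hS : v S = S.card) :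
    ∃ M, IsMatching E M ∧ M.image Prod.fst = S := by
  obtain ⟨M, hMS, hfst, hsnd, hcard⟩ := (hv S).1
  have hM : IsMatching E M :=
    ⟨fun p hp => (hMS p hp).2, fun p hp q hq => hfst p hp q hq, fun p hp q hq => hsnd p hp q hq⟩
  refine ⟨M, hM, Finset.eq_of_subset_of_card_le ?_ ?_⟩
  · simpa [Finset.image_subset_iff] using fun p hp => (hMS p hp).1
  · rw [hM.card_image_fst]
    omega

end OXS

section Allocation

variable {n m : ℕ}

lemma mem_bundle {X : Fin m → Option (Fin n)} {g : Fin n} {d : Fin m} :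
    d ∈ bundle X g ↔ X d = some g := by
  simp [bundle]

lemma usw_eq_sum_card {v : Fin n → Finset (Fin m) → ℤ} {X : Fin m → Option (Fin n)}
    (hX : NonRedundant v X) : USW v X = ∑ g, ((bundle X g).card : ℤ) :=
  Finset.sum_congr rfl fun g _ => hX g

lemma card_bundle_piecewise_add (D : Finset (Fin m)) (X Y : Fin m → Option (Fin n)) (g : Fin n) :
    (bundle (D.piecewise Y X) g).card + (bundle (D.piecewise X Y) g).card =
      (bundle X g).card + (bundle Y g).card := by
  have hsplit : ∀ Z Z' : Fin m → Option (Fin n), (bundle (D.piecewise Z Z') g).card =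
      ((bundle Z g).filter (· ∈ D)).card + ((bundle Z' g).filter (· ∉ D)).card := by
    intro Z Z'
    rw [← card_filter_add_card_filter_not (s := bundle (D.piecewise Z Z') g) (· ∈ D)]
    congr 2 <;> ext d <;> by_cases hd : d ∈ D <;> simp [mem_bundle, hd]
  rw [hsplit, hsplit, ← card_filter_add_card_filter_not (s := bundle X g) (· ∈ D),
    ← card_filter_add_card_filter_not (s := bundle Y g) (· ∈ D)]
  omega

end Allocation

section HWSD

variable {n m : ℕ} {v w : Fin n → Finset (Fin m) → ℤ} {P : Fin m → Fin n → Fin n → Prop}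
  {X Y : Fin m → Option (Fin n)}

lemma OptStrictPref.asymm (hP : ∀ d, Std.Asymm (P d)) {d : Fin m} {a b : Option (Fin n)}
    (hab : OptStrictPref P d a b) : ¬ OptStrictPref P d b a := by
  cases a with
  | none => exact hab.elim
  | some a =>
    cases b with
    | none => exact not_false
    | some b => exact (hP d).asymm a b hab

lemma HWSDgt.usw_le (hXY : HWSDgt v P X Y) : USW v Y ≤ USW v X :=
  hXY.elim le_of_lt fun h => h.1.ge

lemma HWSDgt.exists_first_pref (hXY : HWSDgt v P X Y) (hle : USW v X ≤ USW v Y) :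
    ∃ j, OptStrictPref P j (X j) (Y j) ∧ ∀ k < j, X k = Y k :=
  hXY.elim (fun h => absurd hle h.not_ge) fun h => h.2

/-- By optimality neither welfare can drop, so the first doctor on which the exchange acts would
strictly prefer each of her two hospitals to the other. -/
lemma IsHWSDOpt.not_nonRedundant_piecewise (hP : ∀ d, Std.Asymm (P d))
    (hX : IsHWSDOpt v P X) (hY : IsHWSDOpt w P Y) {D : Finset (Fin m)}
    (hD : ∃ d ∈ D, X d ≠ Y d) (hX' : NonRedundant v (D.piecewise Y X)) :
    ¬ NonRedundant w (D.piecewise X Y) := by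
  intro hY'
  set X' := D.piecewise Y X
  set Y' := D.piecewise X Y
  have hdiff : ∀ d, X d ≠ X' d ↔ Y d ≠ Y' d := by
    intro d
    by_cases hd : d ∈ D <;> simp [X', Y', hd, ne_comm]
  obtain ⟨d, hdD, hXYd⟩ := hD
  have hXX' : X' ≠ X := fun h =>
    hXYd ((congrFun h d).symm.trans (Finset.piecewise_eq_of_mem D Y X hdD))
  have hYY' : Y' ≠ Y := fun h =>
    hXYd ((Finset.piecewise_eq_of_mem D X Y hdD).symm.trans (congrFun h d))
  have hgtX := hX.2 X' hX' hXX'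
  have hgtY := hY.2 Y' hY' hYY'
  have hsum : USW v X' + USW w Y' = USW v X + USW w Y := by
    simp only [usw_eq_sum_card hX', usw_eq_sum_card hY', usw_eq_sum_card hX.1,
      usw_eq_sum_card hY.1, ← Finset.sum_add_distrib]
    exact Finset.sum_congr rfl fun g _ => mod_cast card_bundle_piecewise_add D X Y g
  obtain ⟨i, hiX, hi⟩ := hgtX.exists_first_pref (by linarith [hgtY.usw_le])
  obtain ⟨j, hjY, hj⟩ := hgtY.exists_first_pref (by linarith [hgtX.usw_le])
  have hi' : X i ≠ X' i := fun h => hiX.asymm hP (h ▸ hiX)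
  have hj' : Y j ≠ Y' j := fun h => hjY.asymm hP (h ▸ hjY)
  obtain rfl : i = j := by
    rcases lt_trichotomy i j with hij | rfl | hji
    · exact absurd (hj i hij) ((hdiff i).mp hi')
    · rfl
    · exact absurd (hi j hji) ((hdiff j).mpr hj')
  have hiD : i ∈ D := by
    by_contra hiD
    exact hi' (Finset.piecewise_eq_of_notMem _ _ _ hiD).symm
  rw [show X' i = Y i from Finset.piecewise_eq_of_mem _ _ _ hiD] at hiX
  rw [show Y' i = X i from Finset.piecewise_eq_of_mem _ _ _ hiD] at hjY
  exact hiX.asymm hP hjY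

end HWSD

section Realization

variable {n m : ℕ} {σ : Fin n → Type*} {E : ∀ g, Fin m → σ g → Prop}
  {M N : ∀ g, Finset (Fin m × σ g)} {X Y : Fin m → Option (Fin n)}

def Realizes (E : ∀ g, Fin m → σ g → Prop) (M : ∀ g, Finset (Fin m × σ g))
    (X : Fin m → Option (Fin n)) : Prop :=
  ∀ g, IsMatching (E g) (M g) ∧ (M g).image Prod.fst = bundle X g

lemma Realizes.exists_mem_iff (hM : Realizes E M X) {g : Fin n} {d : Fin m} :
    (∃ s, (d, s) ∈ M g) ↔ X d = some g := by
  rw [← mem_bundle, ← (hM g).2]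
  simp

lemma Realizes.apply_eq_some (hM : Realizes E M X) {g : Fin n} {d : Fin m} {s : σ g}
    (h : (d, s) ∈ M g) : X d = some g :=
  hM.exists_mem_iff.mp ⟨s, h⟩

def SlotClosed (M N : ∀ g, Finset (Fin m × σ g)) (D : Finset (Fin m)) : Prop :=
  ∀ g, ∀ p ∈ M g, ∀ q ∈ N g, p.2 = q.2 → (p.1 ∈ D ↔ q.1 ∈ D)

lemma SlotClosed.symm {D : Finset (Fin m)} (hD : SlotClosed M N D) : SlotClosed N M D :=
  fun g p hp q hq hpq => (hD g q hq p hp hpq.symm).symm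

lemma Realizes.piecewise [∀ g, DecidableEq (σ g)] (hM : Realizes E M X) (hN : Realizes E N Y)
    {D : Finset (Fin m)} (hD : SlotClosed M N D) :
    Realizes E (fun g => (N g).filter (·.1 ∈ D) ∪ (M g).filter (·.1 ∉ D)) (D.piecewise Y X) := by
  intro g
  refine ⟨((hN g).1.subset (filter_subset _ _)).union ((hM g).1.subset (filter_subset _ _))
    ?_ ?_, ?_⟩
  · intro p hp q hq hpq
    exact (mem_filter.mp hq).2 (hpq ▸ (mem_filter.mp hp).2)
  · intro p hp q hq hpq
    exact (mem_filter.mp hq).2 ((hD g q (mem_filter.mp hq).1 p (mem_filter.mp hp).1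
      hpq.symm).mpr (mem_filter.mp hp).2)
  · ext d
    by_cases hd : d ∈ D <;>
      simp [hd, mem_bundle, ← hM.exists_mem_iff, ← hN.exists_mem_iff]

lemma Realizes.notMem_of_mem_of_apply_ne (hM : Realizes E M X) (hN : Realizes E N Y)
    {h : Fin n} (hNM : N h ⊆ M h) {d₀ : Fin m} (hX₀ : X d₀ = some h) (hY₀ : Y d₀ ≠ some h)
    {g : Fin n} {s : σ g} {d : Fin m} (hp : (d₀, s) ∈ M g) : (d, s) ∉ N g := by
  intro hq
  obtain rfl : g = h := Option.some_injective _ ((hM.apply_eq_some hp).symm.trans hX₀)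
  obtain rfl : d = d₀ := congrArg Prod.fst ((hM g).1.2.2 (hNM hq) hp rfl)
  exact hY₀ (hN.apply_eq_some hq)

lemma Realizes.exists_realizes_subset (hM : Realizes E M X) {h : Fin n}
    (hYX : bundle Y h ⊆ bundle X h)
    (hY : ∀ g ≠ h, ∃ N, IsMatching (E g) N ∧ N.image Prod.fst = bundle Y g) :
    ∃ N, Realizes E N Y ∧ N h ⊆ M h := by
  classical
  have : ∀ g, ∃ N : Finset (Fin m × σ g),
      (IsMatching (E g) N ∧ N.image Prod.fst = bundle Y g) ∧ (g = h → N ⊆ M g) := by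
    intro g
    by_cases hg : g = h
    · subst hg
      refine ⟨(M g).filter (·.1 ∈ bundle Y g),
        ⟨(hM g).1.subset (filter_subset _ _), ?_⟩, fun _ => filter_subset _ _⟩
      ext d
      constructor
      · intro hd
        obtain ⟨p, hp, rfl⟩ := mem_image.mp hd
        exact (mem_filter.mp hp).2
      · intro hd
        obtain ⟨s, hs⟩ := hM.exists_mem_iff.mpr (mem_bundle.mp (hYX hd))
        exact mem_image.mpr ⟨(d, s), mem_filter.mpr ⟨hs, hd⟩, rfl⟩
    · obtain ⟨N, hN⟩ := hY g hg
      exact ⟨N, hN, fun h => absurd h hg⟩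
  choose N hN hNM using this
  exact ⟨N, hN, hNM h rfl⟩

end Realization

section AlternatingReach

variable {n m : ℕ} {σ : Fin n → Type*} {E : ∀ g, Fin m → σ g → Prop}
  {M N : ∀ g, Finset (Fin m × σ g)} {X Y : Fin m → Option (Fin n)} {d₀ d d' : Fin m}

def AlternatingStep (M N : ∀ g, Finset (Fin m × σ g)) (d d' : Fin m) : Prop :=
  ∃ g s, (d, s) ∈ N g ∧ (d', s) ∈ M g

open Classical in
noncomputable def alternatingReach (M N : ∀ g, Finset (Fin m × σ g)) (d₀ : Fin m) :
    Finset (Fin m) :=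
  univ.filter (Relation.ReflTransGen (AlternatingStep M N) d₀)

lemma mem_alternatingReach :
    d ∈ alternatingReach M N d₀ ↔ Relation.ReflTransGen (AlternatingStep M N) d₀ d := by
  simp [alternatingReach]

lemma self_mem_alternatingReach : d₀ ∈ alternatingReach M N d₀ :=
  mem_alternatingReach.mpr Relation.ReflTransGen.refl

lemma exists_alternatingStep_of_mem_alternatingReach (hd : d ∈ alternatingReach M N d₀)
    (hne : d ≠ d₀) : ∃ d' ∈ alternatingReach M N d₀, AlternatingStep M N d' d := by
  rcases (mem_alternatingReach.mp hd).cases_tail with rfl | ⟨d', hd', hstep⟩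
  · exact absurd rfl hne
  · exact ⟨d', mem_alternatingReach.mpr hd', hstep⟩

/-- Every `M`-slot in the reach other than that of `d₀` was entered through its `N`-edge. -/
lemma slotClosed_alternatingReach (hM : Realizes E M X) (hN : ∀ g, IsMatching (E g) (N g))
    (h₀ : ∀ g s d, (d₀, s) ∈ M g → (d, s) ∉ N g) :
    SlotClosed M N (alternatingReach M N d₀) := by
  rintro g ⟨d, s⟩ hp ⟨d', s'⟩ hq (rfl : s = s')
  refine ⟨fun hd => ?_, fun hd' => ?_⟩
  · by_cases hd₀ : d = d₀
    · subst hd₀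
      exact absurd hq (h₀ g s d' hp)
    obtain ⟨d'', hd'', g', s', hq', hp'⟩ := exists_alternatingStep_of_mem_alternatingReach hd hd₀
    obtain rfl : g' = g :=
      Option.some_injective _ ((hM.apply_eq_some hp').symm.trans (hM.apply_eq_some hp))
    obtain rfl : s' = s := congrArg Prod.snd ((hM g').1.2.1 hp' hp rfl)
    obtain rfl : d'' = d' := congrArg Prod.fst ((hN g').2.2 hq' hq rfl)
    exact hd''
  · exact mem_alternatingReach.mpr ((mem_alternatingReach.mp hd').tail ⟨g, s, hq, hp⟩)

lemma eq_or_apply_eq_of_mem_alternatingReach (hM : Realizes E M X) (hN : Realizes E N Y)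
    {h : Fin n} (hNM : N h ⊆ M h) (hd : d ∈ alternatingReach M N d₀) (hXd : X d = some h) :
    d = d₀ ∨ Y d = some h := by
  refine or_iff_not_imp_left.mpr fun hd₀ => ?_
  obtain ⟨d', -, g, s, hq, hp⟩ := exists_alternatingStep_of_mem_alternatingReach hd hd₀
  obtain rfl : g = h := Option.some_injective _ ((hM.apply_eq_some hp).symm.trans hXd)
  obtain rfl : d' = d := congrArg Prod.fst ((hM g).1.2.2 (hNM hq) hp rfl)
  exact hN.apply_eq_some hq

lemma bundle_piecewise_alternatingReach_subset (hM : Realizes E M X) (hN : Realizes E N Y)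
    {h : Fin n} (hNM : N h ⊆ M h) :
    bundle ((alternatingReach M N d₀).piecewise X Y) h ⊆ insert d₀ (bundle Y h) := by
  intro d hd
  rw [mem_bundle] at hd
  rw [mem_insert, mem_bundle]
  by_cases hdD : d ∈ alternatingReach M N d₀
  · rw [Finset.piecewise_eq_of_mem _ _ _ hdD] at hd
    exact eq_or_apply_eq_of_mem_alternatingReach hM hN hNM hdD hd
  · rw [Finset.piecewise_eq_of_notMem _ _ _ hdD] at hd
    exact Or.inr hd

end AlternatingReach

section OXSRealization

variable {n m : ℕ} {k : Fin n → ℕ} {E : ∀ g, Fin m → Fin (k g) → Prop}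
  {X : Fin m → Option (Fin n)}

lemma Realizes.apply_bundle {M : ∀ g, Finset (Fin m × Fin (k g))} (hM : Realizes E M X)
    {g : Fin n} {w : Finset (Fin m) → ℤ} (hw : IsOXSRep (E g) w) :
    w (bundle X g) = (bundle X g).card :=
  (hM g).2 ▸ hw.apply_image_fst (hM g).1

lemma exists_realizes {v : Fin n → Finset (Fin m) → ℤ} (hE : ∀ g, IsOXSRep (E g) (v g))
    (hX : NonRedundant v X) : ∃ M, Realizes E M X := by
  choose M hM using fun g => (hE g).exists_isMatching (hX g)
  exact ⟨M, hM⟩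

end OXSRealization

/-- Lemma 3.3: with binary OXS hospital valuations, if hospital `h` reports
`f_T S = |S ∩ T|` for some `T ⊆ X_h` (where `X` is the truthful HWSD output) instead
of `v h`, then the HWSD output `Y` for the misreported profile satisfies `Y_h = T`. -/
theorem hwsd_fT_report {n m : ℕ} (v : Fin n → Finset (Fin m) → ℤ)
    (P : Fin m → Fin n → Fin n → Prop)
    (hv : ∀ h, IsBinaryOXS (v h)) (hP : ∀ d, IsStrictTotalOrder (Fin n) (P d))
    (X : Fin m → Option (Fin n)) (hX : IsHWSDOpt v P X)
    (h : Fin n) (T : Finset (Fin m)) (hT : T ⊆ bundle X h)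
    (Y : Fin m → Option (Fin n))
    (hY : IsHWSDOpt (Function.update v h (fun S => ((S ∩ T).card : ℤ))) P Y) :
    bundle Y h = T := by
  classical
  have hYT : bundle Y h ⊆ T := by
    have hYh := hY.1 h
    rw [Function.update_self] at hYh
    exact inter_eq_left.mp (eq_of_subset_of_card_le inter_subset_left (by omega))
  by_contra hne
  obtain ⟨d₀, hd₀T, hd₀Y⟩ := exists_of_ssubset (hYT.ssubset_of_ne hne)
  have hX₀ : X d₀ = some h := mem_bundle.mp (hT hd₀T)
  have hY₀ : Y d₀ ≠ some h := fun hY₀ => hd₀Y (mem_bundle.mpr hY₀)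
  choose k E hE using hv
  change ∀ g, IsOXSRep (E g) (v g) at hE
  obtain ⟨M, hM⟩ := exists_realizes hE hX.1
  obtain ⟨N, hN, hNM⟩ := hM.exists_realizes_subset (hYT.trans hT) fun g hg =>
    (hE g).exists_isMatching (by simpa [Function.update_of_ne hg] using hY.1 g)
  have hD := slotClosed_alternatingReach hM (fun g => (hN g).1) fun g s d hp =>
    hM.notMem_of_mem_of_apply_ne hN hNM hX₀ hY₀ hp
  refine hX.not_nonRedundant_piecewise (fun d => haveI := hP d; inferInstance) hY
    ⟨d₀, self_mem_alternatingReach, ne_of_eq_of_ne hX₀ hY₀.symm⟩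
    (fun g => (hM.piecewise hN hD).apply_bundle (hE g)) fun g => ?_
  by_cases hg : g = h
  · subst hg
    rw [Function.update_self, inter_eq_left.mpr ((bundle_piecewise_alternatingReach_subset hM hN
      hNM).trans (insert_subset hd₀T hYT))]
  · rw [Function.update_of_ne hg]
    exact (hN.piecewise hM hD.symm).apply_bundle (hE g)
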